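/- An admissible control u ∈ 𝕌₁ with associated Carathéodory trajectory x, x(t) = x, u(t) = u, is optimal for the cost ∫_t^T r(x(s), u(s)) ds + q(x(T)) (i.e., attains the infimum defining Q(x, u, t)) if and only if the function s ↦ g_u(s; x, u, t) := ∫_t^s r(x(τ), u(τ)) dτ + Q(x(s), u(s), s) is non-increasing on [t, T]; equivalently, if and only if g_u(·; x, u, t) is constant on [t, T]. -/

import Mathlib

open MeasureTheory Set

noncomputable section

/-- Carathéodory solution of `ẋ(s) = f(x(s), u(s))` on `[t, T]`:
`x s = x t + ∫_t^s f(x(τ), u(τ)) dτ` (with the integrand interval integrable). -/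
def IsTrajectory {n m : ℕ}
    (f : EuclideanSpace ℝ (Fin n) → EuclideanSpace ℝ (Fin m) → EuclideanSpace ℝ (Fin n))
    (t T : ℝ) (x : ℝ → EuclideanSpace ℝ (Fin n)) (u : ℝ → EuclideanSpace ℝ (Fin m)) : Prop :=
  ∀ s ∈ Set.Icc t T,
    IntervalIntegrable (fun τ => f (x τ) (u τ)) MeasureTheory.volume t s ∧
      x s = x t + ∫ τ in t..s, f (x τ) (u τ)

/-- The total cost `∫_t^T r(x(s), u(s)) ds + q(x(T))`. -/
def cost {n m : ℕ}
    (r : EuclideanSpace ℝ (Fin n) → EuclideanSpace ℝ (Fin m) → ℝ)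
    (q : EuclideanSpace ℝ (Fin n) → ℝ) (t T : ℝ)
    (x : ℝ → EuclideanSpace ℝ (Fin n)) (u : ℝ → EuclideanSpace ℝ (Fin m)) : ℝ :=
  (∫ s in t..T, r (x s) (u s)) + q (x T)

/-- Admissible controls `𝕌₁`: Lipschitz continuous on `[0, T]` with
Lipschitz constant (equivalently, `‖u̇‖_{L^∞}` bound) `M`. -/
def Adm {m : ℕ} (M T : ℝ) (u : ℝ → EuclideanSpace ℝ (Fin m)) : Prop :=
  LipschitzOnWith (Real.toNNReal M) u (Set.Icc 0 T)

/-- The Q-function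
`Q(x₀,u₀,t) = inf { ∫_t^T r(x(s),u(s)) ds + q(x(T)) : u ∈ 𝕌₁, x(t) = x₀, u(t) = u₀ }`. -/
def Qfun {n m : ℕ}
    (f : EuclideanSpace ℝ (Fin n) → EuclideanSpace ℝ (Fin m) → EuclideanSpace ℝ (Fin n))
    (r : EuclideanSpace ℝ (Fin n) → EuclideanSpace ℝ (Fin m) → ℝ)
    (q : EuclideanSpace ℝ (Fin n) → ℝ) (M T : ℝ)
    (x₀ : EuclideanSpace ℝ (Fin n)) (u₀ : EuclideanSpace ℝ (Fin m)) (t : ℝ) : ℝ :=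
  sInf { c : ℝ | ∃ x u, Adm M T u ∧ IsTrajectory f t T x u ∧
      x t = x₀ ∧ u t = u₀ ∧ c = cost r q t T x u }

/-!
Dynamic programming: for `t ≤ s₁ ≤ s₂ ≤ T`, splicing the given control at time `s₂` with any
admissible competitor starting from `(x s₂, u s₂)` gives an admissible control from
`(x s₁, u s₁)`, so `Q(x(s₁), u(s₁), s₁) ≤ ∫_{s₁}^{s₂} r + Q(x(s₂), u(s₂), s₂)`, i.e. `g_u` is
non-decreasing along every admissible pair. Since `g_u(t) = Q(x₀, u₀, t)` and `g_u(T)` is the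
cost of `u`, optimality says exactly that the non-decreasing `g_u` takes the same value at both
ends of `[t, T]`.
-/

section Order

variable {α β : Type*} [Preorder α] [PartialOrder β] {g : α → β} {a b : α}

theorem MonotoneOn.eq_iff_antitoneOn_Icc (hg : MonotoneOn g (Icc a b)) (hab : a ≤ b) :
    g b = g a ↔ AntitoneOn g (Icc a b) := by
  have ha : a ∈ Icc a b := left_mem_Icc.2 hab
  have hb : b ∈ Icc a b := right_mem_Icc.2 hab
  refine ⟨fun hba y hy z hz hyz => ?_, fun hanti => (hanti ha hb hab).antisymm (hg ha hb hab)⟩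
  calc g z ≤ g b := hg hz hb hz.2
    _ = g a := hba
    _ ≤ g y := hg ha hy hy.1

theorem MonotoneOn.eq_iff_forall_eq_Icc (hg : MonotoneOn g (Icc a b)) (hab : a ≤ b) :
    g b = g a ↔ ∀ s ∈ Icc a b, g s = g a := by
  have ha : a ∈ Icc a b := left_mem_Icc.2 hab
  have hb : b ∈ Icc a b := right_mem_Icc.2 hab
  refine ⟨fun hba s hs => ?_, fun h => h b hb⟩
  exact (hba ▸ hg hs hb hs.2).antisymm (hg ha hs hs.1)

end Order

def concatAt {α : Type*} (c : ℝ) (v w : ℝ → α) : ℝ → α :=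
  fun τ => if τ ≤ c then v τ else w τ

section Concat

open scoped Interval

variable {α : Type*} {a b c τ : ℝ} {v w : ℝ → α}

theorem eqOn_concatAt_left : EqOn (concatAt c v w) v (Iic c) :=
  fun _ hτ => if_pos hτ

theorem eqOn_concatAt_right : EqOn (concatAt c v w) w (Ioi c) :=
  fun _ hτ => if_neg (not_le.2 hτ)

theorem concatAt_of_le (hτ : τ ≤ c) : concatAt c v w τ = v τ :=
  eqOn_concatAt_left hτ

theorem concatAt_of_ge (hτ : c ≤ τ) (hvw : v c = w c) : concatAt c v w τ = w τ := by
  rcases hτ.eq_or_lt with rfl | hlt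
  · exact (concatAt_of_le le_rfl).trans hvw
  · exact eqOn_concatAt_right hlt

theorem concatAt_comp₂ {β γ : Type*} (F : α → β → γ) (v' w' : ℝ → β) :
    (fun τ => F (concatAt c v w τ) (concatAt c v' w' τ)) =
      concatAt c (fun τ => F (v τ) (v' τ)) (fun τ => F (w τ) (w' τ)) := by
  funext τ
  unfold concatAt
  split_ifs <;> rfl

theorem LipschitzOnWith.concatAt [PseudoMetricSpace α] {K : NNReal}
    (hv : LipschitzOnWith K v (Icc a c)) (hw : LipschitzOnWith K w (Icc c b)) (hvw : v c = w c) :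
    LipschitzOnWith K (_root_.concatAt c v w) (Icc a b) := by
  rw [lipschitzOnWith_iff_dist_le_mul] at hv hw ⊢
  have cross : ∀ p ∈ Icc a b, ∀ s ∈ Icc a b, p ≤ c → c < s →
      dist (_root_.concatAt c v w p) (_root_.concatAt c v w s) ≤ K * dist p s := by
    intro p hp s hs hpc hcs
    rw [concatAt_of_le hpc, concatAt_of_ge hcs.le hvw]
    have hc : c ∈ Icc a b := ⟨hp.1.trans hpc, hcs.le.trans hs.2⟩
    calc dist (v p) (w s) ≤ dist (v p) (v c) + dist (w c) (w s) := hvw ▸ dist_triangle _ _ _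
      _ ≤ K * dist p c + K * dist c s :=
          add_le_add (hv p ⟨hp.1, hpc⟩ c ⟨hc.1, le_rfl⟩)
            (hw c ⟨le_rfl, hc.2⟩ s ⟨hcs.le, hs.2⟩)
      _ = K * dist p s := by
          rw [Real.dist_eq, Real.dist_eq, Real.dist_eq, abs_of_nonpos (by linarith),
            abs_of_nonpos (by linarith), abs_of_nonpos (by linarith)]
          ring
  intro p hp s hs
  rcases le_or_gt p c with hpc | hcp <;> rcases le_or_gt s c with hsc | hcs
  · rw [concatAt_of_le hpc, concatAt_of_le hsc]
    exact hv p ⟨hp.1, hpc⟩ s ⟨hs.1, hsc⟩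
  · exact cross p hp s hs hpc hcs
  · rw [dist_comm, dist_comm p]
    exact cross s hs p hp hsc hcp
  · rw [eqOn_concatAt_right hcp, eqOn_concatAt_right hcs]
    exact hw p ⟨hcp.le, hp.2⟩ s ⟨hcs.le, hs.2⟩

theorem eqOn_concatAt_uIoc_left (ha : a ≤ c) (hb : b ≤ c) : EqOn (concatAt c v w) v (Ι a b) :=
  fun _ hτ => eqOn_concatAt_left (hτ.2.trans (max_le ha hb))

theorem eqOn_concatAt_uIoc_right (ha : c ≤ a) (hb : c ≤ b) : EqOn (concatAt c v w) w (Ι a b) :=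
  fun _ hτ => eqOn_concatAt_right ((le_min ha hb).trans_lt hτ.1)

variable {E : Type*} [NormedAddCommGroup E] {φ ψ : ℝ → E} {μ : Measure ℝ}

theorem IntervalIntegrable.concatAt (hac : a ≤ c) (hcb : c ≤ b)
    (hφ : IntervalIntegrable φ μ a c) (hψ : IntervalIntegrable ψ μ c b) :
    IntervalIntegrable (_root_.concatAt c φ ψ) μ a b :=
  (hφ.congr (eqOn_concatAt_uIoc_left hac le_rfl).symm).trans
    (hψ.congr (eqOn_concatAt_uIoc_right le_rfl hcb).symm)

theorem intervalIntegral.integral_concatAt_of_le [NormedSpace ℝ E] (ha : a ≤ c) (hb : b ≤ c) :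
    ∫ τ in a..b, concatAt c φ ψ τ ∂μ = ∫ τ in a..b, φ τ ∂μ :=
  integral_congr_ae (.of_forall fun _ => (eqOn_concatAt_uIoc_left ha hb ·))

theorem intervalIntegral.integral_concatAt [NormedSpace ℝ E] (hac : a ≤ c) (hcb : c ≤ b)
    (hφ : IntervalIntegrable φ μ a c) (hψ : IntervalIntegrable ψ μ c b) :
    ∫ τ in a..b, concatAt c φ ψ τ ∂μ =
      (∫ τ in a..c, φ τ ∂μ) + ∫ τ in c..b, ψ τ ∂μ := by
  rw [← integral_add_adjacent_intervals (hφ.congr (eqOn_concatAt_uIoc_left hac le_rfl).symm)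
    (hψ.congr (eqOn_concatAt_uIoc_right le_rfl hcb).symm), integral_concatAt_of_le hac le_rfl,
    integral_congr_ae (.of_forall fun _ => (eqOn_concatAt_uIoc_right le_rfl hcb ·))]

end Concat

section ControlProblem

variable {n m : ℕ}
  {f : EuclideanSpace ℝ (Fin n) → EuclideanSpace ℝ (Fin m) → EuclideanSpace ℝ (Fin n)}
  {r : EuclideanSpace ℝ (Fin n) → EuclideanSpace ℝ (Fin m) → ℝ}
  {q : EuclideanSpace ℝ (Fin n) → ℝ} {M T Cr Cq t : ℝ}
  {x x' : ℝ → EuclideanSpace ℝ (Fin n)} {u u' : ℝ → EuclideanSpace ℝ (Fin m)}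

theorem Adm.continuousOn (hu : Adm M T u) (ht : 0 ≤ t) : ContinuousOn u (Icc t T) :=
  LipschitzOnWith.continuousOn hu |>.mono (Icc_subset_Icc_left ht)

theorem IsTrajectory.mono_start (hx : IsTrajectory f t T x u) {s : ℝ} (hs : s ∈ Icc t T) :
    IsTrajectory f s T x u := by
  intro σ hσ
  obtain ⟨hint_s, hx_s⟩ := hx s hs
  obtain ⟨hint_σ, hx_σ⟩ := hx σ ⟨hs.1.trans hσ.1, hσ.2⟩
  have hint : IntervalIntegrable (fun τ => f (x τ) (u τ)) volume s σ :=
    hint_s.symm.trans hint_σ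
  refine ⟨hint, ?_⟩
  rw [hx_σ, hx_s, ← intervalIntegral.integral_add_adjacent_intervals hint_s hint, add_assoc]

theorem IsTrajectory.continuousOn (hx : IsTrajectory f t T x u) : ContinuousOn x (Icc t T) := by
  rcases lt_or_ge T t with hTt | htT
  · simp [Icc_eq_empty_of_lt hTt]
  have hprim := intervalIntegral.continuousOn_primitive_interval' (hx T ⟨htT, le_rfl⟩).1
    left_mem_uIcc
  rw [uIcc_of_le htT] at hprim
  exact (continuousOn_const.add hprim).congr fun s hs => (hx s hs).2

theorem IsTrajectory.intervalIntegrable_comp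
    (hr : Continuous fun p : EuclideanSpace ℝ (Fin n) × EuclideanSpace ℝ (Fin m) => r p.1 p.2)
    (hu : ContinuousOn u (Icc t T)) (hx : IsTrajectory f t T x u) {a b : ℝ}
    (ha : a ∈ Icc t T) (hb : b ∈ Icc t T) :
    IntervalIntegrable (fun τ => r (x τ) (u τ)) volume a b :=
  (hr.comp_continuousOn (hx.continuousOn.prodMk hu)).mono (uIcc_subset_Icc ha hb)
    |>.intervalIntegrable

theorem IsTrajectory.concatAt {c : ℝ} (hx : IsTrajectory f t T x u)
    (hx' : IsTrajectory f c T x' u') (hc : c ∈ Icc t T) (hxc : x c = x' c) :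
    IsTrajectory f t T (concatAt c x x') (concatAt c u u') := by
  intro σ hσ
  rw [concatAt_comp₂ f, concatAt_of_le hc.1]
  obtain ⟨hint_c, hx_c⟩ := hx c hc
  rcases le_total σ c with hσc | hcσ
  · obtain ⟨hint_σ, hx_σ⟩ := hx σ hσ
    refine ⟨hint_σ.congr (eqOn_concatAt_uIoc_left hc.1 hσc).symm, ?_⟩
    rw [concatAt_of_le hσc, intervalIntegral.integral_concatAt_of_le hc.1 hσc, hx_σ]
  · obtain ⟨hint'_σ, hx'_σ⟩ := hx' σ ⟨hcσ, hσ.2⟩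
    refine ⟨hint_c.concatAt hc.1 hcσ hint'_σ, ?_⟩
    rw [concatAt_of_ge hcσ hxc, intervalIntegral.integral_concatAt hc.1 hcσ hint_c hint'_σ,
      hx'_σ, ← hxc, hx_c, add_assoc]

def costSet
    (f : EuclideanSpace ℝ (Fin n) → EuclideanSpace ℝ (Fin m) → EuclideanSpace ℝ (Fin n))
    (r : EuclideanSpace ℝ (Fin n) → EuclideanSpace ℝ (Fin m) → ℝ)
    (q : EuclideanSpace ℝ (Fin n) → ℝ) (M T : ℝ)
    (x₀ : EuclideanSpace ℝ (Fin n)) (u₀ : EuclideanSpace ℝ (Fin m)) (t : ℝ) : Set ℝ :=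
  { c : ℝ | ∃ x u, Adm M T u ∧ IsTrajectory f t T x u ∧
      x t = x₀ ∧ u t = u₀ ∧ c = cost r q t T x u }

theorem Qfun_eq_sInf_costSet
    (x₀ : EuclideanSpace ℝ (Fin n)) (u₀ : EuclideanSpace ℝ (Fin m)) :
    Qfun f r q M T x₀ u₀ t = sInf (costSet f r q M T x₀ u₀ t) :=
  rfl

theorem cost_mem_costSet (hu : Adm M T u) (hx : IsTrajectory f t T x u) :
    cost r q t T x u ∈ costSet f r q M T (x t) (u t) t :=
  ⟨x, u, hu, hx, rfl, rfl, rfl⟩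

theorem bddBelow_costSet (hrb : ∀ y v, |r y v| ≤ Cr) (hqb : ∀ y, |q y| ≤ Cq)
    (x₀ : EuclideanSpace ℝ (Fin n)) (u₀ : EuclideanSpace ℝ (Fin m)) :
    BddBelow (costSet f r q M T x₀ u₀ t) := by
  refine ⟨-(Cr * |T - t| + Cq), ?_⟩
  rintro _ ⟨x, u, -, -, -, -, rfl⟩
  have hint : ‖∫ s in t..T, r (x s) (u s)‖ ≤ Cr * |T - t| :=
    intervalIntegral.norm_integral_le_of_norm_le_const fun s _ => hrb (x s) (u s)
  have hq := hqb (x T)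
  rw [Real.norm_eq_abs] at hint
  rw [cost]
  linarith [neg_abs_le (∫ s in t..T, r (x s) (u s)), neg_abs_le (q (x T))]

theorem Qfun_le_cost (hrb : ∀ y v, |r y v| ≤ Cr) (hqb : ∀ y, |q y| ≤ Cq)
    (hu : Adm M T u) (hx : IsTrajectory f t T x u) :
    Qfun f r q M T (x t) (u t) t ≤ cost r q t T x u :=
  csInf_le (bddBelow_costSet hrb hqb _ _) (cost_mem_costSet hu hx)

theorem Qfun_terminal (hrb : ∀ y v, |r y v| ≤ Cr) (hqb : ∀ y, |q y| ≤ Cq)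
    (y : EuclideanSpace ℝ (Fin n)) (v : EuclideanSpace ℝ (Fin m)) :
    Qfun f r q M T y v T = q y := by
  have hconst : IsTrajectory f T T (fun _ => y) (fun _ => v) := by
    intro s hs
    obtain rfl : s = T := hs.2.antisymm hs.1
    simp
  have hmem : q y ∈ costSet f r q M T y v T :=
    ⟨_, _, LipschitzWith.const' v |>.lipschitzOnWith, hconst, rfl, rfl, by simp [cost]⟩
  refine (csInf_le (bddBelow_costSet hrb hqb _ _) hmem).antisymm (le_csInf ⟨_, hmem⟩ ?_)
  rintro _ ⟨x, u, -, -, rfl, -, rfl⟩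
  simp [cost]

theorem cost_concatAt {s₁ s₂ : ℝ} (h₁₂ : s₁ ≤ s₂) (h₂T : s₂ ≤ T) (hx₂ : x s₂ = x' s₂)
    (hr : IntervalIntegrable (fun τ => r (x τ) (u τ)) volume s₁ s₂)
    (hr' : IntervalIntegrable (fun τ => r (x' τ) (u' τ)) volume s₂ T) :
    cost r q s₁ T (concatAt s₂ x x') (concatAt s₂ u u') =
      (∫ τ in s₁..s₂, r (x τ) (u τ)) + cost r q s₂ T x' u' := by
  rw [cost, cost, concatAt_comp₂ r, intervalIntegral.integral_concatAt h₁₂ h₂T hr hr',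
    concatAt_of_ge h₂T hx₂, add_assoc]

theorem Qfun_le_integral_add_Qfun (hrb : ∀ y v, |r y v| ≤ Cr) (hqb : ∀ y, |q y| ≤ Cq)
    (hr : Continuous fun p : EuclideanSpace ℝ (Fin n) × EuclideanSpace ℝ (Fin m) => r p.1 p.2)
    {s₁ s₂ : ℝ} (h₀₁ : 0 ≤ s₁) (h₁₂ : s₁ ≤ s₂) (h₂T : s₂ ≤ T)
    (hu : Adm M T u) (hx : IsTrajectory f s₁ T x u) :
    Qfun f r q M T (x s₁) (u s₁) s₁ ≤
      (∫ τ in s₁..s₂, r (x τ) (u τ)) + Qfun f r q M T (x s₂) (u s₂) s₂ := by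
  have hs₂ : s₂ ∈ Icc s₁ T := ⟨h₁₂, h₂T⟩
  rw [← sub_le_iff_le_add', Qfun_eq_sInf_costSet (x s₂)]
  refine le_csInf ⟨_, cost_mem_costSet hu (hx.mono_start hs₂)⟩ ?_
  rintro _ ⟨x', u', hu', hx', hx'₂, hu'₂, rfl⟩
  have hsplice : Adm M T (concatAt s₂ u u') :=
    LipschitzOnWith.concatAt (LipschitzOnWith.mono hu (Icc_subset_Icc_right h₂T))
      (LipschitzOnWith.mono hu' (Icc_subset_Icc_left (h₀₁.trans h₁₂))) hu'₂.symm
  have hr₁ := hx.intervalIntegrable_comp hr (hu.continuousOn h₀₁)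
    (left_mem_Icc.2 (h₁₂.trans h₂T)) hs₂
  have hr₂ := hx'.intervalIntegrable_comp hr (hu'.continuousOn (h₀₁.trans h₁₂))
    (left_mem_Icc.2 h₂T) (right_mem_Icc.2 h₂T)
  rw [sub_le_iff_le_add', ← cost_concatAt h₁₂ h₂T hx'₂.symm hr₁ hr₂]
  calc Qfun f r q M T (x s₁) (u s₁) s₁
      = Qfun f r q M T (concatAt s₂ x x' s₁) (concatAt s₂ u u' s₁) s₁ := by
        rw [concatAt_of_le h₁₂, concatAt_of_le h₁₂]
    _ ≤ _ := Qfun_le_cost hrb hqb hsplice (hx.concatAt hx' hs₂ hx'₂.symm)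

/-- The paper's `g_u(s; x(t), u(t), t)`. -/
def valueAlong
    (f : EuclideanSpace ℝ (Fin n) → EuclideanSpace ℝ (Fin m) → EuclideanSpace ℝ (Fin n))
    (r : EuclideanSpace ℝ (Fin n) → EuclideanSpace ℝ (Fin m) → ℝ)
    (q : EuclideanSpace ℝ (Fin n) → ℝ) (M T : ℝ)
    (x : ℝ → EuclideanSpace ℝ (Fin n)) (u : ℝ → EuclideanSpace ℝ (Fin m))
    (t s : ℝ) : ℝ :=
  (∫ τ in t..s, r (x τ) (u τ)) + Qfun f r q M T (x s) (u s) s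

theorem monotoneOn_valueAlong (hrb : ∀ y v, |r y v| ≤ Cr) (hqb : ∀ y, |q y| ≤ Cq)
    (hr : Continuous fun p : EuclideanSpace ℝ (Fin n) × EuclideanSpace ℝ (Fin m) => r p.1 p.2)
    (ht : 0 ≤ t) (hu : Adm M T u) (hx : IsTrajectory f t T x u) :
    MonotoneOn (valueAlong f r q M T x u t) (Icc t T) := by
  intro s₁ hs₁ s₂ hs₂ h₁₂
  have hdp := Qfun_le_integral_add_Qfun hrb hqb hr (ht.trans hs₁.1) h₁₂ hs₂.2 hu
    (hx.mono_start hs₁)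
  have huc := hu.continuousOn ht
  rw [valueAlong, valueAlong, ← intervalIntegral.integral_add_adjacent_intervals
    (hx.intervalIntegrable_comp hr huc (left_mem_Icc.2 (hs₁.1.trans hs₁.2)) hs₁)
    (hx.intervalIntegrable_comp hr huc hs₁ hs₂)]
  linarith

end ControlProblem

theorem optimal_iff_g_antitone_iff_g_const_general {n m : ℕ}
    (f : EuclideanSpace ℝ (Fin n) → EuclideanSpace ℝ (Fin m) → EuclideanSpace ℝ (Fin n))
    (r : EuclideanSpace ℝ (Fin n) → EuclideanSpace ℝ (Fin m) → ℝ)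
    (q : EuclideanSpace ℝ (Fin n) → ℝ) (M T : ℝ)
    (Cr Cq : ℝ)
    (hrb : ∀ x u, |r x u| ≤ Cr) (hqb : ∀ x, |q x| ≤ Cq)
    (Kr : NNReal)
    (hrl : LipschitzWith Kr (fun p : EuclideanSpace ℝ (Fin n) × EuclideanSpace ℝ (Fin m) => r p.1 p.2))
    (x₀ : EuclideanSpace ℝ (Fin n)) (u₀ : EuclideanSpace ℝ (Fin m))
    (t : ℝ) (ht : t ∈ Set.Icc 0 T)
    (x : ℝ → EuclideanSpace ℝ (Fin n)) (u : ℝ → EuclideanSpace ℝ (Fin m))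
    (hu : Adm M T u) (hx : IsTrajectory f t T x u) (hx₀ : x t = x₀) (hu₀ : u t = u₀) :
    (cost r q t T x u = Qfun f r q M T x₀ u₀ t ↔
      AntitoneOn
        (fun s => (∫ τ in t..s, r (x τ) (u τ)) + Qfun f r q M T (x s) (u s) s)
        (Set.Icc t T)) ∧
    (cost r q t T x u = Qfun f r q M T x₀ u₀ t ↔
      ∀ s ∈ Set.Icc t T,
        (∫ τ in t..s, r (x τ) (u τ)) + Qfun f r q M T (x s) (u s) s =
          (∫ τ in t..t, r (x τ) (u τ)) + Qfun f r q M T (x t) (u t) t) := by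
  obtain ⟨h0t, htT⟩ := ht
  have hg := monotoneOn_valueAlong hrb hqb hrl.continuous h0t hu hx
  have hg_start : valueAlong f r q M T x u t t = Qfun f r q M T x₀ u₀ t := by
    rw [valueAlong, intervalIntegral.integral_same, zero_add, hx₀, hu₀]
  have hg_end : valueAlong f r q M T x u t T = cost r q t T x u := by
    rw [valueAlong, Qfun_terminal hrb hqb, cost]
  rw [← hg_start, ← hg_end]
  exact ⟨hg.eq_iff_antitoneOn_Icc htT, hg.eq_iff_forall_eq_Icc htT⟩

/-- **Optimality criterion**: an admissible control `u` with trajectory `x`, `x(t) = x₀`,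
`u(t) = u₀`, is optimal (attains the infimum defining `Q(x₀, u₀, t)`) if and only if
`g_u(s) := ∫_t^s r(x(τ), u(τ)) dτ + Q(x(s), u(s), s)` is non-increasing on `[t, T]`;
equivalently, if and only if `g_u` is constant on `[t, T]`. -/
theorem optimal_iff_g_antitone_iff_g_const {n m : ℕ}
    (f : EuclideanSpace ℝ (Fin n) → EuclideanSpace ℝ (Fin m) → EuclideanSpace ℝ (Fin n))
    (r : EuclideanSpace ℝ (Fin n) → EuclideanSpace ℝ (Fin m) → ℝ)
    (q : EuclideanSpace ℝ (Fin n) → ℝ) (M T : ℝ) (hM : 0 < M)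
    (Cf Cr Cq : ℝ)
    (hfb : ∀ x u, ‖f x u‖ ≤ Cf) (hrb : ∀ x u, |r x u| ≤ Cr) (hqb : ∀ x, |q x| ≤ Cq)
    (Kf Kr Kq : NNReal)
    (hfl : LipschitzWith Kf (fun p : EuclideanSpace ℝ (Fin n) × EuclideanSpace ℝ (Fin m) => f p.1 p.2))
    (hrl : LipschitzWith Kr (fun p : EuclideanSpace ℝ (Fin n) × EuclideanSpace ℝ (Fin m) => r p.1 p.2))
    (hql : LipschitzWith Kq q)
    (x₀ : EuclideanSpace ℝ (Fin n)) (u₀ : EuclideanSpace ℝ (Fin m))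
    (t : ℝ) (ht : t ∈ Set.Icc 0 T)
    (x : ℝ → EuclideanSpace ℝ (Fin n)) (u : ℝ → EuclideanSpace ℝ (Fin m))
    (hu : Adm M T u) (hx : IsTrajectory f t T x u) (hx₀ : x t = x₀) (hu₀ : u t = u₀) :
    (cost r q t T x u = Qfun f r q M T x₀ u₀ t ↔
      AntitoneOn
        (fun s => (∫ τ in t..s, r (x τ) (u τ)) + Qfun f r q M T (x s) (u s) s)
        (Set.Icc t T)) ∧
    (cost r q t T x u = Qfun f r q M T x₀ u₀ t ↔
      ∀ s ∈ Set.Icc t T,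
        (∫ τ in t..s, r (x τ) (u τ)) + Qfun f r q M T (x s) (u s) s =
          (∫ τ in t..t, r (x τ) (u τ)) + Qfun f r q M T (x t) (u t) t) :=
  optimal_iff_g_antitone_iff_g_const_general f r q M T Cr Cq hrb hqb Kr hrl x₀ u₀ t ht x u hu hx hx₀
    hu₀

end
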